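/- arXiv:1811.07718 — 3 statements merged into one kernel-verified Lean document; each statement's English description precedes it below -/
import Mathlib

section
/- For fixed τ > n−1 and nonzero k ∈ ℤⁿ, the Lebesgue measure of the set of ω in a fixed bounded set Ω ⊂ ℝⁿ satisfying |⟨ω,k⟩| < κ/|k|^τ is O(κ/|k|^{τ+1}), with constant depending only on Ω and n. -/
open MeasureTheory RealInnerProductSpace

/-- For fixed `τ > n-1` and nonzero `k ∈ ℤⁿ`, the Lebesgue measure of the set of `ω` in a
fixed bounded measurable `Ω ⊆ ℝⁿ` with `|⟨ω,k⟩| < κ/|k|₁^τ` is `O(κ/|k|₁^(τ+1))`,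
with constant depending only on `Ω` (and `n`). -/
theorem stmt0 (n : ℕ) (τ : ℝ) (hτ : τ > (n : ℝ) - 1)
    (Ω : Set (EuclideanSpace ℝ (Fin n))) (hΩm : MeasurableSet Ω)
    (hΩb : Bornology.IsBounded Ω) :
    ∃ C > 0, ∀ k : Fin n → ℤ, k ≠ 0 → ∀ κ : ℝ, 0 < κ →
      (volume {ω ∈ Ω | |∑ i, ω i * (k i : ℝ)| < κ / (∑ i, |(k i : ℝ)|) ^ τ}).toReal
        ≤ C * κ / (∑ i, |(k i : ℝ)|) ^ (τ + 1) := by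
  obtain ⟨R, hR⟩ := hΩb.subset_closedBall 0
  set R' : ℝ := max R 1 with hR'def
  have hR'1 : (1:ℝ) ≤ R' := le_max_right _ _
  have hR'0 : (0:ℝ) < R' := lt_of_lt_of_le one_pos hR'1
  refine ⟨2 * n * (2 * R') ^ (n - 1) + 1, by positivity, ?_⟩
  intro k hk κ hκ
  set S : ℝ := ∑ i, |(k i : ℝ)| with hSdef
  obtain ⟨i₀, hi₀⟩ : ∃ i, k i ≠ 0 := Function.ne_iff.mp hk
  have hki₀ : (1:ℝ) ≤ |(k i₀ : ℝ)| := by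
    rw [← Int.cast_abs]; exact_mod_cast Int.one_le_abs hi₀
  have hS1 : (1:ℝ) ≤ S :=
    hki₀.trans (Finset.single_le_sum (f := fun i => |(k i:ℝ)|) (fun i _ => abs_nonneg _) (Finset.mem_univ i₀))
  have hS0 : (0:ℝ) < S := lt_of_lt_of_le one_pos hS1
  set kE : EuclideanSpace ℝ (Fin n) := WithLp.toLp 2 (fun i => (k i : ℝ)) with hkEdef
  have hcoord : ∀ i, |(k i : ℝ)| ≤ ‖kE‖ := by
    intro i
    have h1 : ⟪EuclideanSpace.single i (1:ℝ), kE⟫ = (k i : ℝ) := by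
      rw [EuclideanSpace.inner_single_left]; simp [hkEdef]
    calc |(k i:ℝ)| = |⟪EuclideanSpace.single i (1:ℝ), kE⟫| := by rw [h1]
      _ ≤ ‖EuclideanSpace.single i (1:ℝ)‖ * ‖kE‖ := abs_real_inner_le_norm _ _
      _ = ‖kE‖ := by rw [EuclideanSpace.norm_single]; simp
  have hkE0 : (0:ℝ) < ‖kE‖ := lt_of_lt_of_le one_pos (hki₀.trans (hcoord i₀))
  have hSn : S ≤ n * ‖kE‖ := by
    calc S ≤ ∑ _i : Fin n, ‖kE‖ := Finset.sum_le_sum fun i _ => hcoord i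
      _ = n * ‖kE‖ := by simp [Finset.sum_const, nsmul_eq_mul]
  set u : EuclideanSpace ℝ (Fin n) := ‖kE‖⁻¹ • kE with hudef
  have hu : Orthonormal ℝ (({i₀} : Set (Fin n)).restrict fun _ => u) := by
    constructor
    · rintro ⟨i, hi⟩
      show ‖u‖ = 1
      rw [hudef, norm_smul, norm_inv, norm_norm, inv_mul_cancel₀ (ne_of_gt hkE0)]
    · rintro ⟨i, hi⟩ ⟨j, hj⟩ hij
      rw [Set.mem_singleton_iff] at hi hj
      exact absurd (Subtype.ext (hi.trans hj.symm)) hij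
  obtain ⟨b, hb⟩ := hu.exists_orthonormalBasis_extension_of_card_eq (by simp)
  have hbi₀ : b i₀ = u := hb i₀ rfl
  set ε : ℝ := κ / S ^ τ / ‖kE‖ with hεdef
  have hSτ : (0:ℝ) < S ^ τ := Real.rpow_pos_of_pos hS0 τ
  have hε0 : (0:ℝ) < ε := by positivity
  set I : Fin n → Set ℝ := fun i => if i = i₀ then Set.Ioo (-ε) ε else Set.Icc (-R') R' with hIdef
  set e := (MeasurableEquiv.toLp 2 (Fin n → ℝ)).symm with hedef
  have hsub : {ω ∈ Ω | |∑ i, ω i * (k i : ℝ)| < κ / S ^ τ} ⊆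
      b.repr ⁻¹' (e ⁻¹' Set.univ.pi I) := by
    rintro ω ⟨hωΩ, hωlt⟩
    have hωn : ‖ω‖ ≤ R' := by
      have := hR hωΩ
      rw [Metric.mem_closedBall, dist_zero_right] at this
      exact this.trans (le_max_left _ _)
    intro j _
    have hrepr : e (b.repr ω) j = ⟪b j, ω⟫ := b.repr_apply_apply ω j
    by_cases hj : j = i₀
    · subst hj
      have hinner : ⟪b j, ω⟫ = ‖kE‖⁻¹ * ∑ i, ω i * (k i : ℝ) := by
        rw [hbi₀, hudef, real_inner_smul_left]
        congr 1
      have : |e (b.repr ω) j| < ε := by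
        rw [hrepr, hinner, abs_mul, abs_inv, abs_norm, hεdef]
        rw [div_eq_mul_inv (κ / S ^ τ), mul_comm (κ / S ^ τ)]
        exact mul_lt_mul_of_pos_left hωlt (by positivity)
      simp only [hIdef, if_pos rfl, Set.mem_Ioo]
      exact abs_lt.mp this
    · have : |e (b.repr ω) j| ≤ R' := by
        rw [hrepr]
        calc |⟪b j, ω⟫| ≤ ‖b j‖ * ‖ω‖ := abs_real_inner_le_norm _ _
          _ = ‖ω‖ := by rw [b.orthonormal.1 j, one_mul]
          _ ≤ R' := hωn
      simp only [hIdef, if_neg hj, Set.mem_Icc]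
      exact abs_le.mp this
  have hmeasI : ∀ i, MeasurableSet (I i) := by
    intro i
    by_cases h : i = i₀ <;> simp [hIdef, h]
  have hmeas : MeasurableSet (Set.univ.pi I) := MeasurableSet.univ_pi hmeasI
  have hvol : volume (b.repr ⁻¹' (e ⁻¹' Set.univ.pi I)) = ∏ i, volume (I i) := by
    rw [b.measurePreserving_repr.measure_preimage
      ((e.measurable hmeas).nullMeasurableSet),
      (EuclideanSpace.volume_preserving_symm_measurableEquiv_toLp (Fin n)).measure_preimage
      hmeas.nullMeasurableSet, volume_pi_pi]
  have hprod : ∏ i, volume (I i) =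
      ENNReal.ofReal (2*ε) * ENNReal.ofReal (2*R') ^ (n-1) := by
    rw [← Finset.mul_prod_erase Finset.univ _ (Finset.mem_univ i₀)]
    congr 1
    · simp only [hIdef, if_pos rfl, Real.volume_Ioo]
      congr 1; ring
    · rw [Finset.prod_congr rfl (fun j hj => ?_), Finset.prod_const,
        Finset.card_erase_of_mem (Finset.mem_univ _), Finset.card_univ, Fintype.card_fin]
      simp only [hIdef, if_neg (Finset.ne_of_mem_erase hj), Real.volume_Icc]
      congr 1; ring
  have hfin : volume (b.repr ⁻¹' (e ⁻¹' Set.univ.pi I)) ≠ ⊤ := by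
    rw [hvol, hprod]
    exact ENNReal.mul_ne_top ENNReal.ofReal_ne_top (ENNReal.pow_ne_top ENNReal.ofReal_ne_top)
  have hle : (volume {ω ∈ Ω | |∑ i, ω i * (k i : ℝ)| < κ / S ^ τ}).toReal ≤
      2*ε * (2*R')^(n-1) := by
    calc (volume {ω ∈ Ω | |∑ i, ω i * (k i : ℝ)| < κ / S ^ τ}).toReal
        ≤ (volume (b.repr ⁻¹' (e ⁻¹' Set.univ.pi I))).toReal :=
          ENNReal.toReal_mono hfin (measure_mono hsub)
      _ = 2*ε * (2*R')^(n-1) := by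
          rw [hvol, hprod, ENNReal.toReal_mul, ENNReal.toReal_pow,
            ENNReal.toReal_ofReal (by positivity), ENNReal.toReal_ofReal (by positivity)]
  -- final arithmetic
  have hn1 : (1:ℝ) ≤ n := by
    have := i₀.pos
    exact_mod_cast this
  have hn0 : (0:ℝ) < n := lt_of_lt_of_le one_pos hn1
  have hinv : ‖kE‖⁻¹ ≤ n / S := by
    have h1 : S / n ≤ ‖kE‖ := (div_le_iff₀ hn0).mpr (by linarith [hSn])
    calc ‖kE‖⁻¹ ≤ (S / n)⁻¹ := inv_anti₀ (by positivity) h1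
      _ = n / S := by rw [inv_div]
  have hεle : ε ≤ κ / S ^ τ * (n / S) := by
    rw [hεdef, div_eq_mul_inv (κ / S ^ τ)]
    exact mul_le_mul_of_nonneg_left hinv (by positivity)
  calc (volume {ω ∈ Ω | |∑ i, ω i * (k i : ℝ)| < κ / S ^ τ}).toReal
      ≤ 2*ε * (2*R')^(n-1) := hle
    _ ≤ 2*(κ / S ^ τ * (n / S)) * (2*R')^(n-1) := by gcongr
    _ = (2*n*(2*R')^(n-1)) * κ / S^(τ+1) := by
        rw [Real.rpow_add hS0, Real.rpow_one]
        field_simp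
    _ ≤ (2*n*(2*R')^(n-1)+1) * κ / S^(τ+1) := by
        have hd : (0:ℝ) < S^(τ+1) := Real.rpow_pos_of_pos hS0 _
        apply (div_le_div_iff_of_pos_right hd).mpr
        nlinarith [pow_pos (by linarith : (0:ℝ) < 2*R') (n-1)]
end

section
/- If f : ℝⁿ → ℝ is a smooth function vanishing on a measurable set S, then all derivatives of f vanish at every point of Lebesgue density 1 of S. -/
open MeasureTheory Filter Metric

lemma homothety_ball_img {E : Type*} [NormedAddCommGroup E] [NormedSpace ℝ E]
    (x : E) {r : ℝ} (hr : 0 < r) :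
    AffineMap.homothety x r '' Metric.ball x 1 = Metric.ball x r := by
  ext y
  simp only [Set.mem_image, AffineMap.homothety_apply, Metric.mem_ball]
  constructor
  · rintro ⟨z, hz, rfl⟩
    rw [dist_eq_norm] at hz ⊢
    simp only [vsub_eq_sub, vadd_eq_add, add_sub_cancel_right, norm_smul, Real.norm_eq_abs,
      abs_of_pos hr]
    calc r * ‖z - x‖ < r * 1 := by nlinarith [norm_nonneg (z - x)]
      _ = r := mul_one r
  · intro hy
    refine ⟨x + r⁻¹ • (y - x), ?_, ?_⟩
    · rw [dist_eq_norm] at hy ⊢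
      simp only [add_sub_cancel_left, norm_smul, Real.norm_eq_abs, abs_of_pos (inv_pos.2 hr)]
      rw [inv_mul_lt_iff₀ hr, mul_one]
      exact hy
    · simp only [vsub_eq_sub, vadd_eq_add, add_sub_cancel_left, smul_smul,
        mul_inv_cancel₀ hr.ne', one_smul, sub_add_cancel]

set_option maxHeartbeats 1000000 in
lemma fderiv_eq_zero_of_density {E F : Type*} [NormedAddCommGroup E] [NormedSpace ℝ E]
    [MeasurableSpace E] [BorelSpace E] [FiniteDimensional ℝ E]
    [NormedAddCommGroup F] [NormedSpace ℝ F]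
    (μ : Measure E) [μ.IsAddHaarMeasure]
    (g : E → F) (T : Set E) (x : E)
    (hT : Tendsto (fun r : ℝ => μ (Metric.ball x r \ T) / μ (Metric.ball x r))
      (nhdsWithin 0 (Set.Ioi 0)) (nhds 0))
    (hg : ∀ y ∈ T, g y = 0) (hgx : g x = 0)
    (hd : DifferentiableAt ℝ g x) : fderiv ℝ g x = 0 := by
  by_contra hL0
  set L := fderiv ℝ g x with hLdef
  obtain ⟨u, hu⟩ : ∃ u, L u ≠ 0 := by
    by_contra h
    push_neg at h
    exact hL0 (ContinuousLinearMap.ext fun u => by simp [h u])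
  have hu0 : u ≠ 0 := fun h => hu (by simp [h])
  have hun : 0 < ‖u‖ := norm_pos_iff.2 hu0
  set ε : ℝ := ‖L u‖ / (2 * ‖u‖) with hεdef
  have hεpos : 0 < ε := div_pos (norm_pos_iff.2 hu) (by positivity)
  set C : Set E := {y | ε * ‖y - x‖ < ‖L (y - x)‖} ∩ (ball x 1 \ closedBall x 2⁻¹) with hCdef
  have hCopen : IsOpen C := by
    refine IsOpen.inter ?_ (isOpen_ball.sdiff Metric.isClosed_closedBall)
    exact isOpen_lt (by fun_prop) (by fun_prop)
  have hCne : C.Nonempty := by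
    refine ⟨x + (3 / (4 * ‖u‖)) • u, ?_, ?_, ?_⟩
    · have h1 : ‖(3 / (4 * ‖u‖)) • u‖ = 3 / (4 * ‖u‖) * ‖u‖ := by
        rw [norm_smul, Real.norm_eq_abs, abs_of_pos (by positivity)]
      have h2 : ‖L ((3 / (4 * ‖u‖)) • u)‖ = 3 / (4 * ‖u‖) * ‖L u‖ := by
        rw [ContinuousLinearMap.map_smul, norm_smul, Real.norm_eq_abs,
          abs_of_pos (show (0:ℝ) < 3 / (4 * ‖u‖) by positivity)]
      simp only [Set.mem_setOf_eq, add_sub_cancel_left, h1, h2, hεdef]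
      have hLu : 0 < ‖L u‖ := norm_pos_iff.2 hu
      have hne : ‖u‖ ≠ 0 := hun.ne'
      have h4 : 3 / (4 * ‖u‖) * ‖u‖ = 3 / 4 := by field_simp
      rw [h4, div_mul_eq_mul_div, div_mul_eq_mul_div,
        div_lt_div_iff₀ (by positivity) (by positivity)]
      nlinarith [mul_pos hLu hun]
    · rw [mem_ball, dist_eq_norm, add_sub_cancel_left, norm_smul, Real.norm_eq_abs,
        abs_of_pos (by positivity)]
      rw [div_mul_eq_mul_div]
      rw [div_lt_one (by positivity)]
      nlinarith
    · rw [mem_closedBall, dist_eq_norm, add_sub_cancel_left, norm_smul, Real.norm_eq_abs,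
        abs_of_pos (by positivity), not_le, div_mul_eq_mul_div, lt_div_iff₀ (by positivity)]
      nlinarith
  have hCpos : 0 < μ C := hCopen.measure_pos μ hCne
  have hCsub : C ⊆ ball x 1 := fun y hy => hy.2.1
  have hCfin : μ C < ⊤ := lt_of_le_of_lt (measure_mono hCsub) measure_ball_lt_top
  have hB1pos : 0 < μ (ball x 1) := measure_ball_pos μ x one_pos
  have hB1fin : μ (ball x 1) < ⊤ := measure_ball_lt_top
  -- ratio bound eventually
  have hclt : (0:ENNReal) < μ C / μ (ball x 1) :=
    ENNReal.div_pos hCpos.ne' hB1fin.ne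
  have hev1 : ∀ᶠ r in nhdsWithin 0 (Set.Ioi 0),
      μ (Metric.ball x r \ T) / μ (Metric.ball x r) < μ C / μ (ball x 1) :=
    hT.eventually_lt_const hclt
  -- differentiability bound
  have hlo := hd.hasFDerivAt.isLittleO.def (half_pos hεpos)
  rw [Metric.eventually_nhds_iff] at hlo
  obtain ⟨δ, hδpos, hδ⟩ := hlo
  have hev2 : ∀ᶠ r in nhdsWithin 0 (Set.Ioi 0), r ∈ Set.Ioo 0 δ :=
    Ioo_mem_nhdsGT_of_mem ⟨le_refl 0, hδpos⟩
  obtain ⟨r, hr1, hr2⟩ := (hev1.and hev2).exists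
  obtain ⟨hrpos, hrδ⟩ := hr2
  -- the scaled cone
  set Cr : Set E := AffineMap.homothety x r '' C with hCrdef
  have hCrmeas : μ Cr = ENNReal.ofReal |r ^ Module.finrank ℝ E| * μ C :=
    Measure.addHaar_image_homothety μ x r C
  have hBrmeas : μ (ball x r) = ENNReal.ofReal |r ^ Module.finrank ℝ E| * μ (ball x 1) := by
    rw [← homothety_ball_img x hrpos, Measure.addHaar_image_homothety]
  have hscale : (0:ENNReal) < ENNReal.ofReal |r ^ Module.finrank ℝ E| := by
    rw [ENNReal.ofReal_pos]
    positivity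
  have hBrpos : μ (ball x r) ≠ 0 := (measure_ball_pos μ x hrpos).ne'
  have hBrfin : μ (ball x r) ≠ ⊤ := measure_ball_lt_top.ne
  -- μ (ball x r \ T) < μ Cr
  have hkey : μ (Metric.ball x r \ T) < μ Cr := by
    calc μ (Metric.ball x r \ T)
        = μ (Metric.ball x r \ T) / μ (ball x r) * μ (ball x r) :=
          (ENNReal.div_mul_cancel hBrpos hBrfin).symm
      _ < μ C / μ (ball x 1) * μ (ball x r) :=
          by rw [mul_comm _ (μ (ball x r)), mul_comm _ (μ (ball x r))]; exact ENNReal.mul_lt_mul_right hBrpos hBrfin hr1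
      _ = ENNReal.ofReal |r ^ Module.finrank ℝ E| * (μ C / μ (ball x 1) * μ (ball x 1)) := by
          rw [hBrmeas]; ring
      _ = μ Cr := by rw [ENNReal.div_mul_cancel hB1pos.ne' hB1fin.ne, hCrmeas]
  -- T meets Cr
  obtain ⟨y, hyT, hyCr⟩ : (T ∩ Cr).Nonempty := by
    by_contra hemp
    rw [Set.not_nonempty_iff_eq_empty] at hemp
    have hsub : Cr ⊆ Metric.ball x r \ T := by
      rintro y ⟨z, hz, rfl⟩
      refine ⟨?_, ?_⟩
      · rw [← homothety_ball_img x hrpos]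
        exact Set.mem_image_of_mem _ (hCsub hz)
      · intro hyT
        have : AffineMap.homothety x r z ∈ T ∩ Cr :=
          ⟨hyT, Set.mem_image_of_mem _ hz⟩
        simp [hemp] at this
    exact absurd (measure_mono hsub) (not_le.2 hkey)
  -- derive contradiction
  obtain ⟨z, hzC, hzeq⟩ := hyCr
  have hyx : y - x = r • (z - x) := by
    rw [← hzeq]; simp [AffineMap.homothety_apply]
  have hzn : 2⁻¹ < ‖z - x‖ := by
    have := hzC.2.2
    rwa [mem_closedBall, dist_eq_norm, not_le] at this
  have hynorm : ‖y - x‖ = r * ‖z - x‖ := by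
    rw [hyx, norm_smul, Real.norm_eq_abs, abs_of_pos hrpos]
  have hynpos : 0 < ‖y - x‖ := by
    rw [hynorm]; nlinarith
  have hcone : ε * ‖y - x‖ < ‖L (y - x)‖ := by
    have hz1 := hzC.1
    have hLy : ‖L (y - x)‖ = r * ‖L (z - x)‖ := by
      rw [hyx, ContinuousLinearMap.map_smul, norm_smul, Real.norm_eq_abs, abs_of_pos hrpos]
    rw [hLy, hynorm]
    calc ε * (r * ‖z - x‖) = r * (ε * ‖z - x‖) := by ring
      _ < r * ‖L (z - x)‖ := (mul_lt_mul_iff_right₀ hrpos).2 hz1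
  have hdist : dist y x < δ := by
    have hz01 : ‖z - x‖ < 1 := by
      have := mem_ball.1 hzC.2.1
      rwa [dist_eq_norm] at this
    rw [dist_eq_norm, hynorm]
    nlinarith [norm_nonneg (z - x)]
  have hsmall : ‖L (y - x)‖ ≤ ε / 2 * ‖y - x‖ := by
    have h5 := hδ hdist
    rw [hg y hyT, hgx, sub_zero, zero_sub, norm_neg] at h5
    exact h5
  nlinarith

/-- If a smooth `f : ℝⁿ → ℝ` vanishes on a measurable set `S`, then all derivatives of `f`
vanish at every point of Lebesgue density 1 of `S`. -/
theorem stmt3 (n : ℕ) (f : EuclideanSpace ℝ (Fin n) → ℝ) (hf : ContDiff ℝ (⊤ : ℕ∞) f)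
    (S : Set (EuclideanSpace ℝ (Fin n))) (hS : MeasurableSet S)
    (hzero : ∀ x ∈ S, f x = 0) (x : EuclideanSpace ℝ (Fin n))
    (hx : Tendsto (fun r : ℝ =>
        volume (S ∩ Metric.ball x r) / volume (Metric.ball x r))
      (nhdsWithin 0 (Set.Ioi 0)) (nhds 1)) :
    ∀ m : ℕ, iteratedFDeriv ℝ m f x = 0 := by
  set D : Set (EuclideanSpace ℝ (Fin n)) := {y | Tendsto (fun r : ℝ =>
      volume (S ∩ Metric.ball y r) / volume (Metric.ball y r))
      (nhdsWithin 0 (Set.Ioi 0)) (nhds 1)} with hDdef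
  have hxD : x ∈ D := hx
  -- ball and closedBall measures agree
  have hballcb : ∀ (y : EuclideanSpace ℝ (Fin n)) (A : Set (EuclideanSpace ℝ (Fin n))), ∀ r : ℝ, 0 < r →
      volume (A ∩ Metric.closedBall y r) = volume (A ∩ Metric.ball y r) := by
    intro y A r hr
    apply le_antisymm
    · calc volume (A ∩ Metric.closedBall y r)
          ≤ volume ((A ∩ Metric.ball y r) ∪ Metric.sphere y r) := by
            apply measure_mono
            rintro z ⟨hzA, hz⟩
            rcases lt_or_eq_of_le (Metric.mem_closedBall.1 hz) with h | h
            · exact Or.inl ⟨hzA, Metric.mem_ball.2 h⟩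
            · exact Or.inr h
        _ ≤ volume (A ∩ Metric.ball y r) + volume (Metric.sphere y r) := measure_union_le _ _
        _ = volume (A ∩ Metric.ball y r) := by
            rw [Measure.addHaar_sphere_of_ne_zero volume y hr.ne', add_zero]
    · exact measure_mono (Set.inter_subset_inter_right _ Metric.ball_subset_closedBall)
  -- almost every point of S is in D
  have hSD : volume (S \ D) = 0 := by
    have hbes := Besicovitch.ae_tendsto_measure_inter_div_of_measurableSet volume hS
    rw [ae_iff] at hbes
    refine measure_mono_null ?_ hbes
    intro y ⟨hyS, hyD⟩
    simp only [Set.mem_setOf_eq]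
    intro h
    apply hyD
    rw [hDdef, Set.mem_setOf_eq]
    rw [Set.indicator_of_mem hyS] at h
    simp only [Pi.one_apply] at h
    refine Tendsto.congr' ?_ h
    filter_upwards [eventually_mem_nhdsWithin] with r (hr : r ∈ Set.Ioi 0)
    have hr' : (0:ℝ) < r := hr
    rw [hballcb y S r hr']
    congr 1
    have := hballcb y Set.univ r hr'
    simpa using this
  -- density of complement of D tends to zero at points of D
  have h2 : ∀ y ∈ D, Tendsto (fun r : ℝ =>
      volume (Metric.ball y r \ D) / volume (Metric.ball y r))
      (nhdsWithin 0 (Set.Ioi 0)) (nhds 0) := by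
    intro y hyD
    have hyD' : Tendsto (fun r : ℝ =>
        volume (S ∩ Metric.ball y r) / volume (Metric.ball y r))
        (nhdsWithin 0 (Set.Ioi 0)) (nhds 1) := hyD
    -- first, complement of S
    have hS0 : Tendsto (fun r : ℝ =>
        volume (Metric.ball y r \ S) / volume (Metric.ball y r))
        (nhdsWithin 0 (Set.Ioi 0)) (nhds 0) := by
      have hcong : ∀ᶠ r in nhdsWithin (0:ℝ) (Set.Ioi 0),
          (1 : ENNReal) - volume (S ∩ Metric.ball y r) / volume (Metric.ball y r)
            = volume (Metric.ball y r \ S) / volume (Metric.ball y r) := by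
        filter_upwards [eventually_mem_nhdsWithin] with r (hr : r ∈ Set.Ioi 0)
        have hr' : (0:ℝ) < r := hr
        have hBpos : volume (Metric.ball y r) ≠ 0 := (measure_ball_pos volume y hr').ne'
        have hBfin : volume (Metric.ball y r) ≠ ⊤ := measure_ball_lt_top.ne
        have hd : volume (Metric.ball y r \ S)
            = volume (Metric.ball y r) - volume (S ∩ Metric.ball y r) := by
          have : Metric.ball y r \ S = Metric.ball y r \ (S ∩ Metric.ball y r) := by
            ext z; simp (config := {contextual := true}) [and_comm]
          rw [this, measure_diff Set.inter_subset_right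
            ((hS.inter measurableSet_ball).nullMeasurableSet)
            (lt_of_le_of_lt (measure_mono Set.inter_subset_right) measure_ball_lt_top).ne]
        rw [hd, ENNReal.sub_div (fun _ _ => hBpos), ENNReal.div_self hBpos hBfin]
      have hlim : Tendsto (fun r : ℝ =>
          (1 : ENNReal) - volume (S ∩ Metric.ball y r) / volume (Metric.ball y r))
          (nhdsWithin 0 (Set.Ioi 0)) (nhds 0) := by
        have hc : Continuous (fun a : ENNReal => 1 - a) :=
          ENNReal.continuous_sub_left ENNReal.one_ne_top
        have := (hc.tendsto 1).comp hyD'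
        simpa [Function.comp_def] using this
      exact hlim.congr' hcong
    -- squeeze
    refine tendsto_of_tendsto_of_tendsto_of_le_of_le tendsto_const_nhds hS0
      (fun r => zero_le) (fun r => ?_)
    apply ENNReal.div_le_div_right
    calc volume (Metric.ball y r \ D)
        ≤ volume ((Metric.ball y r \ S) ∪ (S \ D)) := by
          apply measure_mono
          intro z ⟨hz1, hz2⟩
          by_cases hzS : z ∈ S
          · exact Or.inr ⟨hzS, hz2⟩
          · exact Or.inl ⟨hz1, hzS⟩
      _ ≤ volume (Metric.ball y r \ S) + volume (S \ D) := measure_union_le _ _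
      _ = volume (Metric.ball y r \ S) := by rw [hSD, add_zero]
  -- f vanishes on D
  have h0 : ∀ y ∈ D, f y = 0 := by
    intro y hyD
    have hycl : y ∈ closure S := by
      rw [Metric.mem_closure_iff]
      by_contra h
      push_neg at h
      obtain ⟨δ, hδpos, hδ⟩ := h
      have hz : ∀ᶠ r in nhdsWithin (0:ℝ) (Set.Ioi 0),
          volume (S ∩ Metric.ball y r) / volume (Metric.ball y r) = 0 := by
        filter_upwards [Ioo_mem_nhdsGT_of_mem (Set.left_mem_Ico.2 hδpos)]
          with r hr
        have hempty : S ∩ Metric.ball y r = ∅ := by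
          ext z
          simp only [Set.mem_inter_iff, Metric.mem_ball, Set.mem_empty_iff_false,
            iff_false, not_and]
          intro hzS hzb
          exact absurd (lt_of_lt_of_le (by rwa [dist_comm] at hzb) hr.2.le) (not_lt.2 (hδ z hzS))
        simp [hempty]
      have : Tendsto (fun r : ℝ =>
          volume (S ∩ Metric.ball y r) / volume (Metric.ball y r))
          (nhdsWithin 0 (Set.Ioi 0)) (nhds 0) :=
        Tendsto.congr' (by filter_upwards [hz] with r hr; exact hr.symm) tendsto_const_nhds
      have := tendsto_nhds_unique hyD this
      simp at this
    have hcl : IsClosed {z : EuclideanSpace ℝ (Fin n) | f z = 0} :=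
      isClosed_eq hf.continuous continuous_const
    exact closure_minimal (fun z hz => hzero z hz) hcl hycl
  -- main induction
  have key : ∀ m : ℕ, ∀ y ∈ D, iteratedFDeriv ℝ m f y = 0 := by
    intro m
    induction m with
    | zero =>
      intro y hyD
      ext v
      simp [iteratedFDeriv_zero_apply, h0 y hyD]
    | succ m ih =>
      intro y hyD
      have hdiff : DifferentiableAt ℝ (iteratedFDeriv ℝ m f) y :=
        (hf.differentiable_iteratedFDeriv (by exact_mod_cast ENat.coe_lt_top m)).differentiableAt
      have hfd : fderiv ℝ (iteratedFDeriv ℝ m f) y = 0 :=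
        fderiv_eq_zero_of_density volume _ D y (h2 y hyD) ih (ih y hyD) hdiff
      rw [iteratedFDeriv_succ_eq_comp_left, Function.comp_apply, hfd]
      exact LinearIsometryEquiv.map_zero _
  exact fun m => key m x hxD
end

section
/- Let ρ > 1 and let f be smooth on an open set X ⊆ ℝⁿ with Gevrey bounds |∂^α f(x)| ≤ C L^{|α|} (α!)^ρ for all multi-indices α and x ∈ X. If all derivatives of f vanish at x₀ ∈ X, then there exist constants c, C' > 0 (depending only on n, ρ, L, C) such that |f(x₀ + r)| ≤ C' exp(−c |r|^{−1/(ρ−1)}) for all sufficiently small r with x₀ + r ∈ X. -/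
open Metric Set

/-- Gevrey flatness implies super-exponential smallness: if `f` is smooth on the open set
`X` with Gevrey-`ρ` bounds `‖D^k f‖ ≤ C L^k (k!)^ρ` (`ρ > 1`) and all derivatives of `f`
vanish at `x₀ ∈ X`, then there are `c, C' > 0` with
`|f(x₀+r)| ≤ C' exp(-c |r|^{-1/(ρ-1)})` for all sufficiently small `r` with `x₀ + r ∈ X`. -/
theorem stmt5 (n : ℕ) (ρ L C : ℝ) (hρ : 1 < ρ) (hL : 0 < L) (hC : 0 < C)
    (X : Set (EuclideanSpace ℝ (Fin n))) (hX : IsOpen X)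
    (f : EuclideanSpace ℝ (Fin n) → ℝ) (hf : ContDiffOn ℝ (⊤ : ℕ∞) f X)
    (hGev : ∀ k : ℕ, ∀ x ∈ X,
      ‖iteratedFDerivWithin ℝ k f X x‖ ≤ C * L ^ k * (k.factorial : ℝ) ^ ρ)
    (x₀ : EuclideanSpace ℝ (Fin n)) (hx₀ : x₀ ∈ X)
    (hflat : ∀ m : ℕ, iteratedFDerivWithin ℝ m f X x₀ = 0) :
    ∃ c > 0, ∃ C' > 0, ∃ r₀ > 0, ∀ r : EuclideanSpace ℝ (Fin n),
      ‖r‖ ≤ r₀ → x₀ + r ∈ X →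
        |f (x₀ + r)| ≤ C' * Real.exp (-c * ‖r‖ ^ (-(1 / (ρ - 1)))) := by
  -- a closed ball around x₀ inside X
  obtain ⟨δ, hδ, hbX⟩ := Metric.isOpen_iff.1 hX x₀ hx₀
  set ε := δ / 2 with hεdef
  have hε : 0 < ε := by positivity
  have hball : Metric.closedBall x₀ ε ⊆ X :=
    (Metric.closedBall_subset_ball (by simp [hεdef]; linarith)).trans hbX
  -- global derivatives coincide with within-derivatives on X
  have hEq : ∀ (j : ℕ) {y}, y ∈ X →
      iteratedFDerivWithin ℝ j f X y = iteratedFDeriv ℝ j f y := fun j _ hy =>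
    iteratedFDerivWithin_of_isOpen j hX hy
  have hGev' : ∀ k : ℕ, ∀ x ∈ X,
      ‖iteratedFDeriv ℝ k f x‖ ≤ C * L ^ k * (k.factorial : ℝ) ^ ρ := by
    intro k x hx
    rw [← hEq k hx]; exact hGev k x hx
  have hflat' : ∀ m : ℕ, iteratedFDeriv ℝ m f x₀ = 0 := by
    intro m; rw [← hEq m hx₀]; exact hflat m
  have hUD : UniqueDiffOn ℝ X := hX.uniqueDiffOn
  -- differentiability of iterated derivatives
  have hdiffAt : ∀ (j : ℕ), ∀ y ∈ X,
      DifferentiableAt ℝ (iteratedFDeriv ℝ j f) y := by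
    intro j y hy
    have h1 : DifferentiableOn ℝ (iteratedFDerivWithin ℝ j f X) X :=
      hf.differentiableOn_iteratedFDerivWithin (by exact_mod_cast WithTop.coe_lt_top _) hUD
    have h2 : DifferentiableOn ℝ (iteratedFDeriv ℝ j f) X :=
      h1.congr fun x hx => (hEq j hx).symm
    exact (h2 y hy).differentiableAt (hX.mem_nhds hy)
  -- norm of the Fréchet derivative of the j-th derivative
  have hfderiv_norm : ∀ (j : ℕ) (y : EuclideanSpace ℝ (Fin n)),
      ‖fderiv ℝ (iteratedFDeriv ℝ j f) y‖ = ‖iteratedFDeriv ℝ (j + 1) f y‖ := by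
    intro j y
    rw [fderiv_iteratedFDeriv]
    simp only [Function.comp_apply]
    exact LinearIsometryEquiv.norm_map _ _
  -- key Taylor-type estimate
  have key : ∀ (k m j : ℕ), j + m = k → ∀ v : EuclideanSpace ℝ (Fin n), ‖v‖ ≤ ε →
      ‖iteratedFDeriv ℝ j f (x₀ + v)‖ ≤
        C * L ^ k * (k.factorial : ℝ) ^ ρ * ‖v‖ ^ m / (m.factorial : ℝ) := by
    intro k m
    induction m with
    | zero =>
      intro j hj v hv
      obtain rfl : j = k := by omega
      have hx : x₀ + v ∈ X := by
        apply hball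
        simp only [Metric.mem_closedBall, dist_eq_norm, add_sub_cancel_left]
        exact hv
      simpa using hGev' j (x₀ + v) hx
    | succ m ih =>
      intro j hj v hv
      set M := C * L ^ k * (k.factorial : ℝ) ^ ρ with hM
      have hMpos : 0 < M := by
        have : (0:ℝ) < (k.factorial : ℝ) ^ ρ :=
          Real.rpow_pos_of_pos (by exact_mod_cast k.factorial_pos) ρ
        positivity
      -- the path t ↦ x₀ + t • v stays in the closed ball
      have hmem : ∀ t ∈ Icc (0:ℝ) 1, x₀ + t • v ∈ Metric.closedBall x₀ ε := by
        intro t ht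
        simp only [Metric.mem_closedBall, dist_eq_norm, add_sub_cancel_left, norm_smul,
          Real.norm_eq_abs]
        calc |t| * ‖v‖ ≤ 1 * ‖v‖ := by
              apply mul_le_mul_of_nonneg_right _ (norm_nonneg v)
              rw [abs_of_nonneg ht.1]; exact ht.2
          _ ≤ ε := by rw [one_mul]; exact hv
      have hmemX : ∀ t ∈ Icc (0:ℝ) 1, x₀ + t • v ∈ X := fun t ht => hball (hmem t ht)
      set g := fun t : ℝ => iteratedFDeriv ℝ j f (x₀ + t • v) with hg
      set g' := fun t : ℝ => (fderiv ℝ (iteratedFDeriv ℝ j f) (x₀ + t • v)) v with hg'def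
      have hc : ∀ t : ℝ, HasDerivAt (fun t : ℝ => x₀ + t • v) v t := by
        intro t
        simpa using ((hasDerivAt_id t).smul_const v).const_add x₀
      have hgderiv : ∀ t ∈ Icc (0:ℝ) 1, HasDerivAt g (g' t) t := by
        intro t ht
        exact ((hdiffAt j _ (hmemX t ht)).hasFDerivAt).comp_hasDerivAt t (hc t)
      have hgc : ContinuousOn g (Icc (0:ℝ) 1) :=
        fun t ht => ((hgderiv t ht).continuousAt).continuousWithinAt
      -- boundary function
      set B := fun t : ℝ => M * ‖v‖ ^ (m + 1) / (m.factorial : ℝ) * (t ^ (m + 1) / (m + 1))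
        with hBdef
      set B' := fun t : ℝ => M * ‖v‖ ^ (m + 1) / (m.factorial : ℝ) * t ^ m with hB'def
      have hB : ∀ t : ℝ, HasDerivAt B (B' t) t := by
        intro t
        have hm1 : ((m:ℝ) + 1) ≠ 0 := by positivity
        have h1 : HasDerivAt (fun t : ℝ => t ^ (m + 1) / ((m:ℝ) + 1)) (t ^ m) t := by
          have h0 := (hasDerivAt_pow (m + 1) t).div_const ((m:ℝ) + 1)
          have : (↑(m + 1) : ℝ) * t ^ (m + 1 - 1) / ((m:ℝ) + 1) = t ^ m := by
            push_cast; field_simp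
          rwa [this] at h0
        exact h1.const_mul (M * ‖v‖ ^ (m + 1) / (m.factorial : ℝ))
      have ha : ‖g 0‖ ≤ B 0 := by
        have : g 0 = 0 := by
          simp only [hg, zero_smul, add_zero]
          exact hflat' j
        rw [this, norm_zero, hBdef]
        positivity
      have bound : ∀ t ∈ Ico (0:ℝ) 1, ‖g' t‖ ≤ B' t := by
        intro t ht
        have htI : t ∈ Icc (0:ℝ) 1 := ⟨ht.1, ht.2.le⟩
        have h1 : ‖g' t‖ ≤ ‖fderiv ℝ (iteratedFDeriv ℝ j f) (x₀ + t • v)‖ * ‖v‖ :=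
          ContinuousLinearMap.le_opNorm _ v
        have h2 : ‖t • v‖ ≤ ε := by
          calc ‖t • v‖ = |t| * ‖v‖ := by rw [norm_smul, Real.norm_eq_abs]
            _ ≤ 1 * ‖v‖ := by
              apply mul_le_mul_of_nonneg_right _ (norm_nonneg v)
              rw [abs_of_nonneg ht.1]; exact ht.2.le
            _ ≤ ε := by rw [one_mul]; exact hv
        have h3 := ih (j + 1) (by omega) (t • v) h2
        rw [hfderiv_norm] at h1
        have h4 : ‖t • v‖ = t * ‖v‖ := by
          rw [norm_smul, Real.norm_eq_abs, abs_of_nonneg ht.1]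
        rw [h4] at h3
        calc ‖g' t‖ ≤ ‖iteratedFDeriv ℝ (j + 1) f (x₀ + t • v)‖ * ‖v‖ := h1
          _ ≤ (M * (t * ‖v‖) ^ m / (m.factorial : ℝ)) * ‖v‖ := by
              apply mul_le_mul_of_nonneg_right _ (norm_nonneg v)
              exact h3
          _ = B' t := by rw [hB'def, mul_pow]; ring
      have := image_norm_le_of_norm_deriv_right_le_deriv_boundary hgc
        (fun t ht => (hgderiv t ⟨ht.1, ht.2.le⟩).hasDerivWithinAt) ha hB bound
        (right_mem_Icc.2 zero_le_one)
      have hg1 : g 1 = iteratedFDeriv ℝ j f (x₀ + v) := by simp [hg]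
      have hB1 : B 1 = M * ‖v‖ ^ (m + 1) / ((m + 1).factorial : ℝ) := by
        rw [hBdef]
        simp only [one_pow, Nat.factorial_succ]
        push_cast
        have h1 : (m.factorial : ℝ) ≠ 0 := by positivity
        have h2 : ((m:ℝ) + 1) ≠ 0 := by positivity
        field_simp
      rw [hg1, hB1] at this
      exact this
  -- Taylor bound for f itself
  have taylor : ∀ (k : ℕ) (r : EuclideanSpace ℝ (Fin n)), ‖r‖ ≤ ε →
      |f (x₀ + r)| ≤ C * L ^ k * (k.factorial : ℝ) ^ ρ * ‖r‖ ^ k / (k.factorial : ℝ) := by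
    intro k r hr
    have := key k k 0 (by omega) r hr
    rwa [norm_iteratedFDeriv_zero, Real.norm_eq_abs] at this
  -- numerics
  have hρ1 : 0 < ρ - 1 := by linarith
  set β := 1 / (ρ - 1) with hβdef
  have hβ : 0 < β := by positivity
  refine ⟨(Real.exp 1 * L) ^ (-β), Real.rpow_pos_of_pos (by positivity) _,
    C * Real.exp 1, by positivity, ε, hε, ?_⟩
  intro r hr hrX
  set s := ‖r‖ with hs
  have hs0 : 0 ≤ s := norm_nonneg r
  rcases eq_or_lt_of_le hs0 with hs0' | hspos
  · -- r = 0
    have hr0 : r = 0 := norm_eq_zero.1 hs0'.symm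
    have : f (x₀ + r) = 0 := by
      have h0 := hflat' 0
      have := norm_iteratedFDeriv_zero (𝕜 := ℝ) (f := f) (x := x₀)
      rw [h0, norm_zero] at this
      rw [hr0, add_zero]
      exact (norm_eq_zero.1 this.symm)
    have hne : -β ≠ 0 := neg_ne_zero.2 (one_div_ne_zero (by linarith))
    rw [this, abs_zero, ← hs0', Real.zero_rpow hne]
    positivity
  · -- r ≠ 0
    set A := (Real.exp 1 * L * s) ^ (-β) with hAdef
    have heLs : 0 < Real.exp 1 * L * s := by positivity
    have hA : 0 < A := Real.rpow_pos_of_pos heLs _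
    set k := ⌊A⌋₊ with hk
    have hk1 : (k:ℝ) ≤ A := Nat.floor_le hA.le
    have hk2 : A ≤ (k:ℝ) + 1 := (Nat.lt_floor_add_one A).le
    have hfactpos : (0:ℝ) < (k.factorial : ℝ) := by exact_mod_cast k.factorial_pos
    -- step 1: Taylor bound rewritten
    have h1 : |f (x₀ + r)| ≤ C * (L * s * (k:ℝ) ^ (ρ - 1)) ^ k := by
      have ht := taylor k r hr
      have e1 : ((k.factorial : ℝ)) ^ (ρ - 1) = (k.factorial : ℝ) ^ ρ / (k.factorial : ℝ) := by
        rw [Real.rpow_sub hfactpos, Real.rpow_one]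
      have e2 : C * L ^ k * (k.factorial : ℝ) ^ ρ * s ^ k / (k.factorial : ℝ)
          = C * (L * s) ^ k * (k.factorial : ℝ) ^ (ρ - 1) := by
        rw [e1, mul_pow]; ring
      rw [e2] at ht
      have h2 : ((k.factorial : ℝ)) ^ (ρ - 1) ≤ ((k:ℝ) ^ (ρ - 1)) ^ k := by
        have hfk : ((k.factorial : ℝ)) ≤ ((k:ℝ)) ^ k := by
          exact_mod_cast Nat.factorial_le_pow k
        calc ((k.factorial : ℝ)) ^ (ρ - 1) ≤ (((k:ℝ)) ^ k) ^ (ρ - 1) :=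
              Real.rpow_le_rpow hfactpos.le hfk hρ1.le
          _ = ((k:ℝ) ^ (ρ - 1)) ^ k := by
              rw [← Real.rpow_natCast ((k:ℝ)) k, ← Real.rpow_mul (Nat.cast_nonneg k),
                mul_comm, Real.rpow_mul (Nat.cast_nonneg k), Real.rpow_natCast]
      calc |f (x₀ + r)| ≤ C * (L * s) ^ k * (k.factorial : ℝ) ^ (ρ - 1) := ht
        _ ≤ C * (L * s) ^ k * ((k:ℝ) ^ (ρ - 1)) ^ k := by
            apply mul_le_mul_of_nonneg_left h2
            positivity
        _ = C * (L * s * (k:ℝ) ^ (ρ - 1)) ^ k := by rw [mul_pow, mul_pow]; ring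
    -- step 2: the base is at most exp(-1)
    have h3 : L * s * (k:ℝ) ^ (ρ - 1) ≤ Real.exp (-1) := by
      have hkA : ((k:ℝ)) ^ (ρ - 1) ≤ A ^ (ρ - 1) :=
        Real.rpow_le_rpow (Nat.cast_nonneg k) hk1 hρ1.le
      have hβρ : -β * (ρ - 1) = -1 := by rw [hβdef]; field_simp
      have hAval : A ^ (ρ - 1) = (Real.exp 1 * L * s)⁻¹ := by
        rw [hAdef, ← Real.rpow_mul heLs.le, hβρ, Real.rpow_neg_one]
      calc L * s * (k:ℝ) ^ (ρ - 1) ≤ L * s * A ^ (ρ - 1) :=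
            mul_le_mul_of_nonneg_left hkA (by positivity)
        _ = Real.exp (-1) := by
            rw [hAval, Real.exp_neg]
            have h1 : Real.exp 1 ≠ 0 := Real.exp_ne_zero 1
            field_simp
    have hbase : 0 ≤ L * s * (k:ℝ) ^ (ρ - 1) := by positivity
    have h4 : (L * s * (k:ℝ) ^ (ρ - 1)) ^ k ≤ Real.exp (-1) ^ k :=
      pow_le_pow_left₀ hbase h3 k
    have h5 : Real.exp (-1) ^ k = Real.exp (-(k:ℝ)) := by
      rw [← Real.exp_nat_mul, mul_neg_one]
    have h6 : Real.exp (-(k:ℝ)) ≤ Real.exp 1 * Real.exp (-A) := by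
      rw [← Real.exp_add]
      apply Real.exp_le_exp.2
      linarith
    have hAc : (Real.exp 1 * L) ^ (-β) * s ^ (-β) = A := by
      rw [hAdef, Real.mul_rpow (by positivity) hs0]
    calc |f (x₀ + r)| ≤ C * (L * s * (k:ℝ) ^ (ρ - 1)) ^ k := h1
      _ ≤ C * (Real.exp 1 * Real.exp (-A)) := by
          apply mul_le_mul_of_nonneg_left _ hC.le
          calc (L * s * (k:ℝ) ^ (ρ - 1)) ^ k ≤ Real.exp (-1) ^ k := h4
            _ = Real.exp (-(k:ℝ)) := h5
            _ ≤ Real.exp 1 * Real.exp (-A) := h6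
      _ = C * Real.exp 1 * Real.exp (-(Real.exp 1 * L) ^ (-β) * s ^ (-β)) := by
          rw [← hAc, neg_mul]; ring
end
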